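/- arXiv:2205.01596 — 3 statements merged into one kernel-verified Lean document; each statement's English description precedes it below -/
import Mathlib

section
/- Let λ be a partition and Σ_λ its skeleton graph on the boxes of λ. An L-shaped subgraph of Σ_λ is a pair of edges e_1 = {(x,y),(x+1,y)}, e_2 = {(x+1,y),(x+1,y+1)} with all three boxes in λ. Then: (a) distinct L-shaped subgraphs of Σ_λ have disjoint edge sets; and (b) for any choice function selecting one of the two edges of each L-shaped subgraph, the graph obtained from Σ_λ by deleting all selected edges is a spanning tree of Σ_λ (connected and acyclic on all boxes of λ). Consequently there are exactly 2^m such admissible trees, where m is the number of L-shaped subgraphs. -/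
/-- The Young diagram of the partition `λ₁ ≥ ... ≥ λ_ℓ > 0`. -/
def ydiag (l : ℕ) (lam : ℕ → ℕ) : Finset (ℕ × ℕ) :=
  (Finset.Icc 1 l).biUnion fun x => (Finset.Icc 1 (lam x)).image fun y => (x, y)

/-- Two boxes are adjacent if they differ by one in exactly one coordinate. -/
def adjBox (p q : ℕ × ℕ) : Prop :=
  (p.1 = q.1 ∧ (p.2 = q.2 + 1 ∨ q.2 = p.2 + 1)) ∨
  (p.2 = q.2 ∧ (p.1 = q.1 + 1 ∨ q.1 = p.1 + 1))

/-- The skeleton graph `Σ_λ`: vertices are boxes of `λ`, edges connect adjacent boxes. -/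
def skel (l : ℕ) (lam : ℕ → ℕ) : SimpleGraph (ℕ × ℕ) where
  Adj p q := p ∈ ydiag l lam ∧ q ∈ ydiag l lam ∧ adjBox p q
  symm := by
    constructor
    intro p q ⟨hp, hq, h⟩
    refine ⟨hq, hp, ?_⟩
    unfold adjBox at *
    tauto
  loopless := by
    constructor
    intro p ⟨_, _, h⟩
    unfold adjBox at h
    omega

/-- The corners `(x,y)` of L-shaped subgraphs of `Σ_λ`: boxes `(x,y)` with
`(x+1,y)` and `(x+1,y+1)` also boxes of `λ`.  The corresponding L-shaped subgraph has the
two edges `{(x,y),(x+1,y)}` and `{(x+1,y),(x+1,y+1)}`. -/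
def lshapes (l : ℕ) (lam : ℕ → ℕ) : Finset (ℕ × ℕ) :=
  (ydiag l lam).filter fun p =>
    (p.1 + 1, p.2) ∈ ydiag l lam ∧ (p.1 + 1, p.2 + 1) ∈ ydiag l lam

/-- The first edge of the L-shaped subgraph with corner `p`. -/
def ledge1 (p : ℕ × ℕ) : Sym2 (ℕ × ℕ) := s(p, (p.1 + 1, p.2))

/-- The second edge of the L-shaped subgraph with corner `p`. -/
def ledge2 (p : ℕ × ℕ) : Sym2 (ℕ × ℕ) := s((p.1 + 1, p.2), (p.1 + 1, p.2 + 1))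

/-- `D` is the set of edges selected by a choice function picking exactly one of the two
edges of each L-shaped subgraph (and nothing else). -/
def lsel (l : ℕ) (lam : ℕ → ℕ) (D : Set (Sym2 (ℕ × ℕ))) : Prop :=
  (∀ p ∈ lshapes l lam,
      (ledge1 p ∈ D ∧ ledge2 p ∉ D) ∨ (ledge1 p ∉ D ∧ ledge2 p ∈ D)) ∧
  ∀ e ∈ D, ∃ p ∈ lshapes l lam, e = ledge1 p ∨ e = ledge2 p

/-!
Orient every edge of `Σ_λ` towards the box that comes first in the order "smaller row index
first, then larger column" (`boxRank`). After the selected edges are deleted, every box other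
than `(1, λ₁)` keeps exactly one edge going down in this order: a box of row `1` moves right,
and a box `(x+1, y)` moves up unless the edge up is deleted, in which case `(x, y)` is the
corner of an L-shape and the edge to the right survives. At least one descending edge gives
connectedness, at most one gives acyclicity: the maximal box of a cycle would have two.
-/

namespace SimpleGraph

variable {V α : Type*} [LinearOrder α] {G : SimpleGraph V}

theorem reachable_of_forall_exists_adj_lt (f : V → α) {S : Finset V} {r : V}
    (h : ∀ v ∈ S, v ≠ r → ∃ w ∈ S, G.Adj v w ∧ f w < f v) :
    ∀ v ∈ S, G.Reachable v r := by
  classical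
  by_contra! hbad
  obtain ⟨v, hv, hmin⟩ := (S.filter (¬ G.Reachable · r)).exists_min_image f
    (by simpa [Finset.filter_nonempty_iff] using hbad)
  rw [Finset.mem_filter] at hv
  obtain ⟨w, hwS, hvw, hlt⟩ := h v hv.1 (by rintro rfl; exact hv.2 .rfl)
  have hw : G.Reachable w r := by
    by_contra hw
    exact (hmin w (Finset.mem_filter.mpr ⟨hwS, hw⟩)).not_gt hlt
  exact hv.2 (hvw.reachable.trans hw)

theorem isAcyclic_of_forall_adj_lt_unique (f : V → α) (hf : Function.Injective f)
    (h : ∀ u a b, G.Adj u a → G.Adj u b → f a < f u → f b < f u → a = b) :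
    G.IsAcyclic := by
  classical
  intro v c hc
  obtain ⟨u, hu, hmax⟩ := c.support.toFinset.exists_max_image f ⟨v, by simp⟩
  rw [List.mem_toFinset] at hu
  have hcu := hc.rotate hu
  have lower : ∀ w ∈ (c.rotate u hu).support, G.Adj u w → f w < f u := fun w hw huw =>
    (hmax w (by simpa using hw)).lt_of_ne (hf.ne huw.ne.symm)
  exact hcu.snd_ne_penultimate <| h u _ _ (Walk.adj_snd hcu.not_nil)
    (Walk.adj_penultimate hcu.not_nil).symm
    (lower _ (Walk.getVert_mem_support _ _) (Walk.adj_snd hcu.not_nil))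
    (lower _ (Walk.getVert_mem_support _ _) (Walk.adj_penultimate hcu.not_nil).symm)

theorem deleteEdges_injOn : Set.InjOn G.deleteEdges {D | D ⊆ G.edgeSet} := by
  intro D hD D' hD' h
  calc D = G.edgeSet \ (G.deleteEdges D).edgeSet := by
        rw [edgeSet_deleteEdges, Set.sdiff_sdiff_cancel_left hD]
    _ = D' := by rw [h, edgeSet_deleteEdges, Set.sdiff_sdiff_cancel_left hD']

end SimpleGraph

theorem mem_ydiag {l : ℕ} {lam : ℕ → ℕ} {x y : ℕ} :
    (x, y) ∈ ydiag l lam ↔ 1 ≤ x ∧ x ≤ l ∧ 1 ≤ y ∧ y ≤ lam x := by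
  simp [ydiag, and_assoc]

theorem ledge1_injective : Function.Injective ledge1 := by
  rintro ⟨a, b⟩ ⟨c, d⟩ h
  simp only [ledge1, Sym2.eq_iff, Prod.mk.injEq] at h
  ext <;> omega

theorem ledge2_injective : Function.Injective ledge2 := by
  rintro ⟨a, b⟩ ⟨c, d⟩ h
  simp only [ledge2, Sym2.eq_iff, Prod.mk.injEq] at h
  ext <;> omega

theorem ledge1_ne_ledge2 (p q : ℕ × ℕ) : ledge1 p ≠ ledge2 q := by
  obtain ⟨a, b⟩ := p
  obtain ⟨c, d⟩ := q
  simp only [ne_eq, ledge1, ledge2, Sym2.eq_iff, Prod.mk.injEq]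
  omega

theorem lshape_edges_inter_eq_empty {p q : ℕ × ℕ} (hpq : p ≠ q) :
    ({ledge1 p, ledge2 p} ∩ {ledge1 q, ledge2 q} : Set (Sym2 (ℕ × ℕ))) = ∅ := by
  ext e
  simp only [Set.mem_inter_iff, Set.mem_insert_iff, Set.mem_singleton_iff,
    Set.mem_empty_iff_false, iff_false, not_and]
  rintro (rfl | rfl) (h | h)
  exacts [hpq (ledge1_injective h), ledge1_ne_ledge2 p q h, ledge1_ne_ledge2 q p h.symm,
    hpq (ledge2_injective h)]

def boxRank (p : ℕ × ℕ) : ℕ ×ₗ ℕᵒᵈ := toLex (p.1, OrderDual.toDual p.2)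

theorem boxRank_injective : Function.Injective boxRank := by
  intro p q h
  simpa [boxRank, Prod.ext_iff] using h

theorem boxRank_lt_boxRank {a b c d : ℕ} :
    boxRank (a, b) < boxRank (c, d) ↔ a < c ∨ a = c ∧ d < b := by
  simp [boxRank, Prod.Lex.toLex_lt_toLex]

theorem adjBox_of_boxRank_lt {x y a b : ℕ} (hadj : adjBox (x, y) (a, b))
    (hlt : boxRank (a, b) < boxRank (x, y)) : (a + 1 = x ∧ b = y) ∨ (a = x ∧ b = y + 1) := by
  rw [boxRank_lt_boxRank] at hlt
  unfold adjBox at hadj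
  omega

variable {l : ℕ} {lam : ℕ → ℕ} {D : Set (Sym2 (ℕ × ℕ))}

theorem lsel.ledge2_notMem_of_ledge1_mem (hD : lsel l lam D) {p : ℕ × ℕ} (h : ledge1 p ∈ D) :
    p ∈ lshapes l lam ∧ ledge2 p ∉ D := by
  obtain ⟨q, hq, hpq | hpq⟩ := hD.2 _ h
  · obtain rfl := ledge1_injective hpq
    rcases hD.1 p hq with ⟨-, h2⟩ | ⟨h1, -⟩
    exacts [⟨hq, h2⟩, absurd h h1]
  · exact absurd hpq (ledge1_ne_ledge2 p q)

theorem lsel.row_one_notMem (hD : lsel l lam D) (y : ℕ) : s((1, y), (1, y + 1)) ∉ D := by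
  intro h
  obtain ⟨⟨a, b⟩, hq, he | he⟩ := hD.2 _ h
  all_goals
    have := (mem_ydiag.mp (Finset.mem_filter.mp hq).1).1
    simp only [ledge1, ledge2, Sym2.eq_iff, Prod.mk.injEq] at he
    omega

theorem lsel.not_adj_up_and_right (hD : lsel l lam D) {x y : ℕ}
    (hup : ((skel l lam).deleteEdges D).Adj (x + 1, y) (x, y))
    (hright : ((skel l lam).deleteEdges D).Adj (x + 1, y) (x + 1, y + 1)) : False := by
  obtain ⟨⟨hu, hx, -⟩, hupD⟩ := SimpleGraph.deleteEdges_adj.mp hup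
  obtain ⟨⟨-, hxy, -⟩, hrightD⟩ := SimpleGraph.deleteEdges_adj.mp hright
  rcases hD.1 (x, y) (Finset.mem_filter.mpr ⟨hx, hu, hxy⟩) with ⟨h1, -⟩ | ⟨-, h2⟩
  · exact hupD (Sym2.eq_swap ▸ h1)
  · exact hrightD h2

theorem lsel.adj_boxRank_lt_unique (hD : lsel l lam D) (u a b : ℕ × ℕ)
    (ha : ((skel l lam).deleteEdges D).Adj u a) (hb : ((skel l lam).deleteEdges D).Adj u b)
    (hau : boxRank a < boxRank u) (hbu : boxRank b < boxRank u) : a = b := by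
  obtain ⟨x, y⟩ := u
  obtain ⟨a₁, a₂⟩ := a
  obtain ⟨b₁, b₂⟩ := b
  have hA := adjBox_of_boxRank_lt ha.1.2.2 hau
  have hB := adjBox_of_boxRank_lt hb.1.2.2 hbu
  rcases hA with ⟨rfl, rfl⟩ | ⟨rfl, rfl⟩
  · rcases hB with hB | ⟨rfl, rfl⟩
    · ext <;> omega
    · exact (hD.not_adj_up_and_right ha hb).elim
  · rcases hB with ⟨rfl, rfl⟩ | hB
    · exact (hD.not_adj_up_and_right hb ha).elim
    · ext <;> omega

theorem lsel.exists_adj_boxRank_lt (hmono : ∀ i j, 1 ≤ i → i ≤ j → j ≤ l → lam j ≤ lam i)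
    (hD : lsel l lam D) :
    ∀ v ∈ ydiag l lam, v ≠ (1, lam 1) →
      ∃ w ∈ ydiag l lam, ((skel l lam).deleteEdges D).Adj v w ∧ boxRank w < boxRank v := by
  rintro ⟨x, y⟩ hv hne
  have hv' := mem_ydiag.mp hv
  rcases Nat.lt_or_ge 1 x with hx | hx
  · obtain ⟨x, rfl⟩ : ∃ x', x = x' + 1 := ⟨x - 1, by omega⟩
    have hup : (x, y) ∈ ydiag l lam :=
      mem_ydiag.mpr ⟨by omega, by omega, hv'.2.2.1,
        hv'.2.2.2.trans (hmono x (x + 1) (by omega) (by omega) hv'.2.1)⟩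
    by_cases hupD : s((x + 1, y), (x, y)) ∈ D
    · obtain ⟨hcorner, hrightD⟩ :=
        hD.ledge2_notMem_of_ledge1_mem (p := (x, y)) (by rwa [ledge1, Sym2.eq_swap])
      refine ⟨(x + 1, y + 1), (Finset.mem_filter.mp hcorner).2.2, ?_, ?_⟩
      · exact SimpleGraph.deleteEdges_adj.mpr ⟨⟨hv, (Finset.mem_filter.mp hcorner).2.2,
          by simp [adjBox]⟩, hrightD⟩
      · rw [boxRank_lt_boxRank]; omega
    · refine ⟨(x, y), hup, ?_, ?_⟩
      · exact SimpleGraph.deleteEdges_adj.mpr ⟨⟨hv, hup, by simp [adjBox]⟩, hupD⟩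
      · rw [boxRank_lt_boxRank]; omega
  · obtain rfl : x = 1 := by omega
    have hright : (1, y + 1) ∈ ydiag l lam := by
      rw [mem_ydiag]
      simp only [ne_eq, Prod.mk.injEq, true_and] at hne
      omega
    refine ⟨(1, y + 1), hright, ?_, ?_⟩
    · exact SimpleGraph.deleteEdges_adj.mpr ⟨⟨hv, hright, by simp [adjBox]⟩,
        hD.row_one_notMem y⟩
    · rw [boxRank_lt_boxRank]; omega

theorem lsel.reachable (hmono : ∀ i j, 1 ≤ i → i ≤ j → j ≤ l → lam j ≤ lam i)
    (hD : lsel l lam D) {a b : ℕ × ℕ} (ha : a ∈ ydiag l lam) (hb : b ∈ ydiag l lam) :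
    ((skel l lam).deleteEdges D).Reachable a b :=
  have toRoot := SimpleGraph.reachable_of_forall_exists_adj_lt boxRank
    (hD.exists_adj_boxRank_lt hmono)
  (toRoot a ha).trans (toRoot b hb).symm

theorem lsel.isAcyclic (hD : lsel l lam D) : ((skel l lam).deleteEdges D).IsAcyclic :=
  SimpleGraph.isAcyclic_of_forall_adj_lt_unique boxRank boxRank_injective
    hD.adj_boxRank_lt_unique

theorem lsel.subset_edgeSet (hD : lsel l lam D) : D ⊆ (skel l lam).edgeSet := by
  intro e he
  obtain ⟨p, hp, he⟩ := hD.2 e he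
  obtain ⟨hp₀, hp₁, hp₂⟩ := Finset.mem_filter.mp hp
  rcases he with rfl | rfl
  exacts [⟨hp₀, hp₁, by simp [adjBox]⟩, ⟨hp₁, hp₂, by simp [adjBox]⟩]

theorem lsel.ext {D' : Set (Sym2 (ℕ × ℕ))} (hD : lsel l lam D) (hD' : lsel l lam D')
    (h : ∀ p ∈ lshapes l lam, ledge1 p ∈ D ↔ ledge1 p ∈ D') : D = D' := by
  have subset : ∀ {D D'}, lsel l lam D → lsel l lam D' →
      (∀ p ∈ lshapes l lam, ledge1 p ∈ D ↔ ledge1 p ∈ D') → D ⊆ D' := by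
    intro D D' hD hD' h e he
    obtain ⟨p, hp, rfl | rfl⟩ := hD.2 e he
    · exact (h p hp).1 he
    · rcases hD.1 p hp with ⟨-, h2⟩ | ⟨h1, -⟩
      · exact absurd he h2
      · rcases hD'.1 p hp with ⟨h1', -⟩ | ⟨-, h2'⟩
        exacts [absurd ((h p hp).2 h1') h1, h2']
  exact subset_antisymm (subset hD hD' h) (subset hD' hD fun p hp => (h p hp).symm)

def cornerChoice (l : ℕ) (lam : ℕ → ℕ) (S : Finset (ℕ × ℕ)) : Set (Sym2 (ℕ × ℕ)) :=
  ledge1 '' ↑(lshapes l lam ∩ S) ∪ ledge2 '' ↑(lshapes l lam \ S)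

theorem ledge1_mem_cornerChoice {S : Finset (ℕ × ℕ)} {p : ℕ × ℕ} :
    ledge1 p ∈ cornerChoice l lam S ↔ p ∈ lshapes l lam ∧ p ∈ S := by
  simp [cornerChoice, ledge1_injective.mem_set_image, (ledge1_ne_ledge2 p · |>.symm)]

theorem ledge2_mem_cornerChoice {S : Finset (ℕ × ℕ)} {p : ℕ × ℕ} :
    ledge2 p ∈ cornerChoice l lam S ↔ p ∈ lshapes l lam ∧ p ∉ S := by
  simp [cornerChoice, ledge2_injective.mem_set_image, (ledge1_ne_ledge2 · p)]

theorem lsel_cornerChoice (S : Finset (ℕ × ℕ)) : lsel l lam (cornerChoice l lam S) := by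
  refine ⟨fun p hp => ?_, ?_⟩
  · simp only [ledge1_mem_cornerChoice, ledge2_mem_cornerChoice, hp, true_and]
    tauto
  · rintro _ (⟨p, hp, rfl⟩ | ⟨p, hp, rfl⟩)
    exacts [⟨p, (Finset.mem_inter.mp hp).1, .inl rfl⟩, ⟨p, (Finset.mem_sdiff.mp hp).1, .inr rfl⟩]

theorem setOf_lsel_eq_image_cornerChoice :
    {D | lsel l lam D} = cornerChoice l lam '' ↑(lshapes l lam).powerset := by
  classical
  ext D
  constructor
  · intro hD
    refine ⟨(lshapes l lam).filter (ledge1 · ∈ D),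
      Finset.mem_powerset.mpr (Finset.filter_subset _ _), ?_⟩
    refine (lsel_cornerChoice _).ext hD fun p hp => ?_
    simp [ledge1_mem_cornerChoice, hp]
  · rintro ⟨S, -, rfl⟩
    exact lsel_cornerChoice S

theorem cornerChoice_injOn : Set.InjOn (cornerChoice l lam) ↑(lshapes l lam).powerset := by
  intro S hS T hT h
  simp only [Finset.coe_powerset, Set.mem_preimage, Set.mem_powerset_iff,
    Finset.coe_subset] at hS hT
  ext p
  rw [← and_iff_right_of_imp (@hS p), ← and_iff_right_of_imp (@hT p),
    ← ledge1_mem_cornerChoice, ← ledge1_mem_cornerChoice, h]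

theorem ncard_deleteEdges_lsel :
    {H | ∃ D, lsel l lam D ∧ H = (skel l lam).deleteEdges D}.ncard
      = 2 ^ (lshapes l lam).card := by
  have himage : {H | ∃ D, lsel l lam D ∧ H = (skel l lam).deleteEdges D}
      = (skel l lam).deleteEdges '' {D | lsel l lam D} := by
    ext H
    exact exists_congr fun D => and_congr_right' eq_comm
  have hinj : Set.InjOn (skel l lam).deleteEdges {D | lsel l lam D} :=
    SimpleGraph.deleteEdges_injOn.mono fun _ => lsel.subset_edgeSet
  rw [himage, hinj.ncard_image, setOf_lsel_eq_image_cornerChoice,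
    cornerChoice_injOn.ncard_image, Set.ncard_coe_finset, Finset.card_powerset]

theorem stmt2_general (l : ℕ) (lam : ℕ → ℕ)
    (hmono : ∀ i j, 1 ≤ i → i ≤ j → j ≤ l → lam j ≤ lam i) :
    (∀ p ∈ lshapes l lam, ∀ q ∈ lshapes l lam, p ≠ q →
        ({ledge1 p, ledge2 p} ∩ {ledge1 q, ledge2 q} : Set (Sym2 (ℕ × ℕ))) = ∅) ∧
    (∀ D : Set (Sym2 (ℕ × ℕ)), lsel l lam D →
        (∀ a ∈ ydiag l lam, ∀ b ∈ ydiag l lam,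
          ((skel l lam).deleteEdges D).Reachable a b) ∧
        ((skel l lam).deleteEdges D).IsAcyclic) ∧
    Set.ncard {H : SimpleGraph (ℕ × ℕ) | ∃ D, lsel l lam D ∧ H = (skel l lam).deleteEdges D}
      = 2 ^ (lshapes l lam).card :=
  ⟨fun _ _ _ _ hpq => lshape_edges_inter_eq_empty hpq,
    fun _ hD => ⟨fun _ ha _ hb => hD.reachable hmono ha hb, hD.isAcyclic⟩,
    ncard_deleteEdges_lsel⟩

/-- (a) Distinct L-shaped subgraphs of `Σ_λ` have disjoint edge sets;
(b) deleting the edges selected by any choice function yields a spanning tree of `Σ_λ`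
(connected on all boxes of `λ` and acyclic);
(c) consequently there are exactly `2^m` admissible trees, `m` the number of L-shapes. -/
theorem stmt2 (l : ℕ) (lam : ℕ → ℕ) (hl : 1 ≤ l)
    (hmono : ∀ i j, 1 ≤ i → i ≤ j → j ≤ l → lam j ≤ lam i)
    (hpos : ∀ i, 1 ≤ i → i ≤ l → 1 ≤ lam i) :
    (∀ p ∈ lshapes l lam, ∀ q ∈ lshapes l lam, p ≠ q →
        ({ledge1 p, ledge2 p} ∩ {ledge1 q, ledge2 q} : Set (Sym2 (ℕ × ℕ))) = ∅) ∧
    (∀ D : Set (Sym2 (ℕ × ℕ)), lsel l lam D →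
        (∀ a ∈ ydiag l lam, ∀ b ∈ ydiag l lam,
          ((skel l lam).deleteEdges D).Reachable a b) ∧
        ((skel l lam).deleteEdges D).IsAcyclic) ∧
    Set.ncard {H : SimpleGraph (ℕ × ℕ) | ∃ D, lsel l lam D ∧ H = (skel l lam).deleteEdges D}
      = 2 ^ (lshapes l lam).card :=
  stmt2_general l lam hmono
end

section
/- Let x > 0, z > 0 be real numbers and let s be a real number that is not an integer. For 0 < q < 1 let ϑ_q(y) = (y^{1/2} − y^{−1/2}) ∏_{i=1}^{∞}(1 − y q^i)(1 − q^i/y). Then lim_{q → 0^+} ϑ_q(x · z · q^s) / ϑ_q(z · q^s) = x^{−(⌊s⌋ + 1/2)}, where ⌊s⌋ is the floor of s and x^r denotes the real power of the positive real x. -/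
open Filter Topology

/-- The odd Jacobi theta function
`ϑ_q(x) = (x^{1/2} - x^{-1/2}) ∏_{i=1}^∞ (1 - x q^i)(1 - q^i/x)` for real `q, x`. -/
noncomputable def theta (q x : ℝ) : ℝ :=
  (Real.sqrt x - (Real.sqrt x)⁻¹) * ∏' i : ℕ, ((1 - x * q ^ (i + 1)) * (1 - q ^ (i + 1) / x))

open Real

/-!
Writing `ϑ_q(y) = (√y - 1/√y) (yq; q)_∞ (q/y; q)_∞`, the shift `(a; q)_∞ = (1 - a) (aq; q)_∞` gives
the quasi-periodicity `ϑ_q(qy) = -(√q y)⁻¹ ϑ_q(y)`. Hence `R(y) = ϑ_q(xy)/ϑ_q(y)` satisfies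
`R(qy) = x⁻¹ R(y)`, and `R(z q^s) = x^{-⌊s⌋} R(z q^t)` with `t = fract s ∈ (0, 1)`. For such `t`
both Pochhammer factors at `y = c q^t` tend to `1`, so `√y ϑ_q(y) = (y - 1)(1 + o(1)) → -1`, and
`R(z q^t) → x^{-1/2}`.
-/

noncomputable def qPochhammer (q a : ℝ) : ℝ := ∏' i : ℕ, (1 - a * q ^ i)

lemma multipliable_one_sub_mul_pow {q : ℝ} (hq : |q| < 1) (a : ℝ) :
    Multipliable fun i : ℕ => 1 - a * q ^ i := by
  have hsum : Summable fun i : ℕ => ‖-(a * q ^ i)‖ := by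
    simpa [abs_mul, abs_pow] using (summable_geometric_of_lt_one (abs_nonneg q) hq).mul_left |a|
  simpa [sub_eq_add_neg] using multipliable_one_add_of_summable hsum

lemma qPochhammer_eq_one_sub_mul {q : ℝ} (hq : |q| < 1) (a : ℝ) :
    qPochhammer q a = (1 - a) * qPochhammer q (a * q) := by
  have h : HasProd (fun i : ℕ => 1 - a * q ^ (i + 1)) (qPochhammer q (a * q)) :=
    (multipliable_one_sub_mul_pow hq (a * q)).hasProd.congr_fun fun i => by ring
  exact h.zero_mul.tprod_eq.trans (by rw [pow_zero, mul_one])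

lemma theta_eq_qPochhammer {q : ℝ} (hq : |q| < 1) (y : ℝ) :
    theta q y = (√y - (√y)⁻¹) * (qPochhammer q (y * q) * qPochhammer q (q / y)) := by
  rw [theta, qPochhammer, qPochhammer, ← (multipliable_one_sub_mul_pow hq _).tprod_mul
    (multipliable_one_sub_mul_pow hq _)]
  refine congrArg _ (tprod_congr fun i => ?_)
  ring

lemma theta_nome_mul {q y : ℝ} (hq0 : 0 < q) (hq1 : q < 1) (hy : 0 < y) :
    theta q (q * y) = -(√q * y)⁻¹ * theta q y := by
  have hq : |q| < 1 := by rwa [abs_of_pos hq0]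
  have h1 : qPochhammer q (y * q) = (1 - y * q) * qPochhammer q (q * y * q) := by
    rw [qPochhammer_eq_one_sub_mul hq, mul_comm y q]
  have h2 : qPochhammer q (q / (q * y)) = (1 - y⁻¹) * qPochhammer q (q / y) := by
    rw [qPochhammer_eq_one_sub_mul hq]
    congr 2 <;> field_simp
  rw [theta_eq_qPochhammer hq, theta_eq_qPochhammer hq, sqrt_mul hq0.le, h1, h2]
  generalize qPochhammer q (q * y * q) = A
  generalize qPochhammer q (q / y) = B
  obtain ⟨a, ha, rfl⟩ : ∃ a, 0 < a ∧ y = a ^ 2 := ⟨√y, sqrt_pos.2 hy, (sq_sqrt hy.le).symm⟩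
  obtain ⟨b, hb, rfl⟩ : ∃ b, 0 < b ∧ q = b ^ 2 := ⟨√q, sqrt_pos.2 hq0, (sq_sqrt hq0.le).symm⟩
  rw [sqrt_sq ha.le, sqrt_sq hb.le]
  field_simp
  ring

lemma theta_mul_div_theta_nome_mul {q x y : ℝ} (hq0 : 0 < q) (hq1 : q < 1) (hx : 0 < x)
    (hy : 0 < y) :
    theta q (x * (q * y)) / theta q (q * y) = x⁻¹ * (theta q (x * y) / theta q y) := by
  rw [mul_left_comm, theta_nome_mul hq0 hq1 (mul_pos hx hy), theta_nome_mul hq0 hq1 hy,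
    mul_div_mul_comm]
  congr 1
  have : 0 < √q := sqrt_pos.2 hq0
  field_simp

lemma theta_mul_div_theta_nome_zpow_mul {q x y : ℝ} (hq0 : 0 < q) (hq1 : q < 1) (hx : 0 < x)
    (hy : 0 < y) (n : ℤ) :
    theta q (x * (q ^ n * y)) / theta q (q ^ n * y) = x ^ (-n) * (theta q (x * y) / theta q y) := by
  induction n using Int.induction_on with
  | zero => simp
  | succ n ih =>
    rw [zpow_add_one₀ hq0.ne', mul_comm _ q, mul_assoc,
      theta_mul_div_theta_nome_mul hq0 hq1 hx (by positivity), ih, neg_add, zpow_add₀ hx.ne',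
      zpow_neg_one]
    ring
  | pred n ih =>
    have hstep := theta_mul_div_theta_nome_mul hq0 hq1 hx
      (show 0 < q ^ (-(n : ℤ) - 1) * y by positivity)
    rw [← mul_assoc q, ← zpow_one_add₀ hq0.ne', add_sub_cancel, ih] at hstep
    rw [neg_sub', sub_neg_eq_add, zpow_add_one₀ hx.ne', mul_right_comm, hstep]
    field_simp

lemma tendsto_rpow_nhdsGT_zero {e : ℝ} (he : 0 < e) :
    Tendsto (fun q : ℝ => q ^ e) (𝓝[>] 0) (𝓝 0) := by
  have := (continuousAt_rpow_const 0 e (.inr he.le)).tendsto.mono_left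
    (nhdsWithin_le_nhds (s := Set.Ioi 0))
  rwa [zero_rpow he.ne'] at this

lemma tendsto_qPochhammer_mul_rpow (c : ℝ) {e : ℝ} (he : 0 < e) :
    Tendsto (fun q => qPochhammer q (c * q ^ e)) (𝓝[>] 0) (𝓝 1) := by
  have hbound : Summable fun i : ℕ => |c| * (1 / 2 : ℝ) ^ i :=
    (summable_geometric_of_lt_one (by norm_num) (by norm_num)).mul_left _
  have hpoint (i : ℕ) : Tendsto (fun q : ℝ => -(c * q ^ e * q ^ i)) (𝓝[>] 0) (𝓝 0) := by
    simpa using (((tendsto_rpow_nhdsGT_zero he).const_mul c).mul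
      (((continuous_pow i).tendsto 0).mono_left nhdsWithin_le_nhds)).neg
  have hdom : ∀ᶠ q in 𝓝[>] (0 : ℝ), ∀ i : ℕ, ‖-(c * q ^ e * q ^ i)‖ ≤ |c| * (1 / 2 : ℝ) ^ i := by
    filter_upwards [Ioo_mem_nhdsGT (by norm_num : (0 : ℝ) < 1 / 2)] with q hq i
    have hqe : q ^ e ≤ 1 := rpow_le_one hq.1.le (by linarith [hq.2]) he.le
    rw [norm_neg, norm_mul, norm_mul, norm_pow, Real.norm_eq_abs, Real.norm_eq_abs,
      Real.norm_eq_abs, abs_of_pos hq.1, abs_of_pos (rpow_pos_of_pos hq.1 e), mul_assoc]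
    gcongr
    simpa using mul_le_mul hqe (pow_le_pow_left₀ hq.1.le hq.2.le i) (pow_nonneg hq.1.le i)
      zero_le_one
  have := tendsto_tprod_one_add_of_dominated_convergence hbound hpoint hdom
  simp only [add_zero, tprod_one] at this
  simpa [qPochhammer, sub_eq_add_neg] using this

lemma sqrt_mul_sqrt_sub_inv {y : ℝ} (hy : 0 < y) : √y * (√y - (√y)⁻¹) = y - 1 := by
  rw [mul_sub, mul_self_sqrt hy.le, mul_inv_cancel₀ (sqrt_pos.2 hy).ne']

lemma tendsto_sqrt_mul_theta {c t : ℝ} (hc : 0 < c) (ht0 : 0 < t) (ht1 : t < 1) :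
    Tendsto (fun q => √(c * q ^ t) * theta q (c * q ^ t)) (𝓝[>] 0) (𝓝 (-1)) := by
  have hlim : Tendsto (fun q => (c * q ^ t - 1) *
      (qPochhammer q (c * q ^ (t + 1)) * qPochhammer q (c⁻¹ * q ^ (1 - t)))) (𝓝[>] 0)
      (𝓝 ((c * 0 - 1) * (1 * 1))) :=
    (((tendsto_rpow_nhdsGT_zero ht0).const_mul c).sub_const 1).mul
      ((tendsto_qPochhammer_mul_rpow c (by linarith)).mul
        (tendsto_qPochhammer_mul_rpow c⁻¹ (by linarith)))
  rw [show (c * 0 - 1) * (1 * 1 : ℝ) = -1 by ring] at hlim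
  refine hlim.congr' ?_
  filter_upwards [Ioo_mem_nhdsGT (by norm_num : (0 : ℝ) < 1)] with q hq
  have hq' : |q| < 1 := by rw [abs_of_pos hq.1]; exact hq.2
  have hy : 0 < c * q ^ t := mul_pos hc (rpow_pos_of_pos hq.1 t)
  have hyq : c * q ^ (t + 1) = c * q ^ t * q := by rw [rpow_add hq.1, rpow_one, mul_assoc]
  have hqy : c⁻¹ * q ^ (1 - t) = q / (c * q ^ t) := by
    rw [rpow_sub hq.1, rpow_one]
    field_simp
  rw [theta_eq_qPochhammer hq', ← mul_assoc (√_), sqrt_mul_sqrt_sub_inv hy, hyq, hqy]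

lemma tendsto_theta_mul_div_theta {x z t : ℝ} (hx : 0 < x) (hz : 0 < z) (ht0 : 0 < t)
    (ht1 : t < 1) :
    Tendsto (fun q => theta q (x * (z * q ^ t)) / theta q (z * q ^ t)) (𝓝[>] 0)
      (𝓝 (x ^ (-(1 / 2 : ℝ)))) := by
  have hlim := ((tendsto_sqrt_mul_theta (mul_pos hx hz) ht0 ht1).div
    (tendsto_sqrt_mul_theta hz ht0 ht1) (by norm_num)).mul_const (√x)⁻¹
  rw [neg_div_neg_eq, div_one, one_mul] at hlim
  rw [rpow_neg hx.le, ← sqrt_eq_rpow]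
  refine hlim.congr' ?_
  filter_upwards [self_mem_nhdsWithin] with q hq
  have : 0 < √x := sqrt_pos.2 hx
  have : 0 < √(z * q ^ t) := sqrt_pos.2 (mul_pos hz (rpow_pos_of_pos hq t))
  rw [Pi.div_apply, mul_assoc x z, sqrt_mul hx.le]
  field_simp

/-- For `x, z > 0` and non-integral real `s`,
`lim_{q → 0⁺} ϑ_q(x z q^s) / ϑ_q(z q^s) = x^{-(⌊s⌋ + 1/2)}`. -/
theorem stmt6 (x z s : ℝ) (hx : 0 < x) (hz : 0 < z) (hs : ¬∃ n : ℤ, s = (n : ℝ)) :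
    Tendsto (fun q : ℝ => theta q (x * z * q ^ s) / theta q (z * q ^ s)) (𝓝[>] 0)
      (𝓝 (x ^ (-((⌊s⌋ : ℝ) + 1 / 2)))) := by
  have ht0 : 0 < Int.fract s := Int.fract_pos.2 fun h => hs ⟨_, h⟩
  have hlim := (tendsto_theta_mul_div_theta hx hz ht0 (Int.fract_lt_one s)).const_mul
    (x ^ (-⌊s⌋))
  have hval : x ^ (-⌊s⌋) * x ^ (-(1 / 2 : ℝ)) = x ^ (-((⌊s⌋ : ℝ) + 1 / 2)) := by
    rw [← rpow_intCast, ← rpow_add hx, Int.cast_neg, neg_add]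
  rw [hval] at hlim
  refine hlim.congr' ?_
  filter_upwards [Ioo_mem_nhdsGT (by norm_num : (0 : ℝ) < 1)] with q hq
  have hqs : q ^ s = q ^ ⌊s⌋ * q ^ Int.fract s := by
    rw [← rpow_intCast, ← rpow_add hq.1, Int.floor_add_fract]
  rw [mul_assoc x, hqs, mul_left_comm z, theta_mul_div_theta_nome_zpow_mul hq.1 hq.2 hx
    (mul_pos hz (rpow_pos_of_pos hq.1 _))]
end

section
/- Let F be a field, V a finite-dimensional F-vector space, L : V → V an invertible F-linear map, and t transcendental over F. Let M(z) = L + Σ_{d≥1} A_d z^d be a formal power series with coefficients A_d ∈ End(V) ⊗_F F(t) (the constant term L is t-independent). Then there exists a unique formal power series Ψ(z) = 1 + Σ_{d≥1} Ψ_d z^d with Ψ_d ∈ End(V) ⊗_F F(t) satisfying the functional equation Ψ(t·z) ∘ L = M(z) ∘ Ψ(z), where Ψ(t·z) = 1 + Σ_{d≥1} Ψ_d t^d z^d. -/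
/-!
Comparing coefficients of `z^d`, the equation says `t^d Ψ_d L - L Ψ_d = ∑_{k<d} M_{d-k} Ψ_k`,
so every `Ψ_d` is determined by the earlier ones as soon as the Sylvester map `X ↦ s X L - L X`
with `s = t^d` is invertible. If `s X L = L X`, then `X` intertwines `s L` with `L`, hence
`χ_L(L) X = X χ_L(s L)`. The left side vanishes by Cayley–Hamilton, while `χ_L(s L)` is
invertible: its determinant is the value at the transcendental `s` of the polynomial
`det χ_L(x L) ∈ F[x]`, which is nonzero because its value at `x = 0` is
`χ_L(0)^n = (± det L)^n ≠ 0`.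
-/

open TensorProduct Polynomial Function Finset

theorem SemiconjBy.aeval {R A : Type*} [CommSemiring R] [Semiring A] [Algebra R A] {a x y : A}
    (h : SemiconjBy a x y) (p : R[X]) : SemiconjBy a (aeval x p) (aeval y p) := by
  induction p using Polynomial.induction_on' with
  | add p q hp hq => simpa only [map_add] using hp.add_right hq
  | monomial n c =>
    simpa only [aeval_monomial] using
      SemiconjBy.mul_right (Algebra.commute_algebraMap_right c a) (h.pow_right n)

section Sylvester

variable {K A : Type*}

def sylvesterMap [CommSemiring K] [Ring A] [Algebra K A] (s : K) (b : A) : A →ₗ[K] A :=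
  s • LinearMap.mulRight K b - LinearMap.mulLeft K b

@[simp]
theorem sylvesterMap_apply [CommSemiring K] [Ring A] [Algebra K A] (s : K) (b x : A) :
    sylvesterMap s b x = s • (x * b) - b * x := rfl

theorem sylvesterMap_injective [CommSemiring K] [Ring A] [Algebra K A] {R : Type*} [CommSemiring R]
    [Algebra R A] {s : K} {b : A} {p : R[X]} (hp : aeval b p = 0)
    (hu : IsUnit (aeval (s • b) p)) : Injective (sylvesterMap s b) := by
  refine (injective_iff_map_eq_zero _).mpr fun x hx => ?_
  have hx : SemiconjBy x (s • b) b := by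
    rw [sylvesterMap_apply, sub_eq_zero, ← mul_smul_comm] at hx
    exact hx
  have := hx.aeval p
  rwa [SemiconjBy, hp, zero_mul, hu.mul_left_eq_zero] at this

theorem sylvesterMap_bijective [Field K] [Ring A] [Algebra K A] [FiniteDimensional K A]
    {R : Type*} [CommSemiring R] [Algebra R A] {s : K} {b : A} {p : R[X]} (hp : aeval b p = 0)
    (hu : IsUnit (aeval (s • b) p)) : Bijective (sylvesterMap s b) :=
  let h := sylvesterMap_injective hp hu
  ⟨h, LinearMap.injective_iff_surjective.mp h⟩

end Sylvester

section Matrix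

variable {n F : Type*} [Fintype n] [DecidableEq n] [CommRing F]

theorem Matrix.mapMatrix_aeval_aeval_X_smul {R : Type*} [CommRing R] [Algebra F R]
    (A : Matrix n n F) (p : F[X]) (x : R) :
    (aeval x).mapMatrix (aeval ((X : F[X]) • A.map (algebraMap F F[X])) p)
      = aeval (x • A.map (algebraMap F R)) p := by
  rw [← aeval_algHom_apply]
  congr 1
  ext i j
  simp only [AlgHom.mapMatrix_apply, Matrix.map_apply, Matrix.smul_apply, smul_eq_mul, map_mul,
    aeval_X, AlgHom.commutes]

theorem Matrix.det_aeval_smul_ne_zero [IsDomain F] {K : Type*} [CommRing K] [Algebra F K]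
    (A : Matrix n n F) {p : F[X]} (hp : p.coeff 0 ≠ 0) {s : K} (hs : Transcendental F s) :
    (aeval (s • A.map (algebraMap F K)) p).det ≠ 0 := by
  set G := aeval ((X : F[X]) • A.map (algebraMap F F[X])) p
  have hG : G.det ≠ 0 := by
    intro h
    have h0 := congr_arg (aeval (0 : F)) h
    rw [AlgHom.map_det, Matrix.mapMatrix_aeval_aeval_X_smul, zero_smul,
      ← coeff_zero_eq_aeval_zero', Matrix.algebraMap_eq_diagonal, Matrix.det_diagonal,
      map_zero] at h0
    simp [hp] at h0
  rw [← Matrix.mapMatrix_aeval_aeval_X_smul, ← AlgHom.map_det]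
  exact fun h => hs ⟨G.det, hG, h⟩

end Matrix

theorem LinearMap.isUnit_aeval_smul_baseChange {F K V : Type*} [CommRing F] [IsDomain F] [Field K]
    [Algebra F K] [AddCommGroup V] [Module F V] [Module.Free F V] [Module.Finite F V]
    (N : V →ₗ[F] V) {p : F[X]} (hp : p.coeff 0 ≠ 0) {s : K} (hs : Transcendental F s) :
    IsUnit (aeval (s • N.baseChange K) p) := by
  classical
  let b₀ := Module.Free.chooseBasis F V
  let b := Algebra.TensorProduct.basis K b₀
  rw [LinearMap.isUnit_iff_isUnit_det, ← LinearMap.det_toMatrix b, isUnit_iff_ne_zero]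
  convert Matrix.det_aeval_smul_ne_zero (LinearMap.toMatrix b₀ b₀ N) hp hs
  have h := aeval_algHom_apply ((LinearMap.toMatrixAlgEquiv b).toAlgHom.restrictScalars F)
    (s • N.baseChange K) p
  simp only [AlgHom.coe_restrictScalars', map_smul] at h
  rw [← LinearMap.toMatrix_baseChange]
  exact h.symm

theorem LinearMap.charpoly_coeff_zero_ne_zero {K V : Type*} [Field K] [AddCommGroup V]
    [Module K V] [FiniteDimensional K V] {f : V →ₗ[K] V} (hf : Bijective f) :
    f.charpoly.coeff 0 ≠ 0 := by
  have h := (LinearMap.isUnit_iff_isUnit_det f).mp ((Module.End.isUnit_iff f).mpr hf)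
  rw [LinearMap.det_eq_sign_charpoly_coeff, isUnit_iff_ne_zero] at h
  exact right_ne_zero_of_mul h

theorem Nat.existsUnique_seq_of_existsUnique_next {α : Type*} [Nonempty α]
    (P : ℕ → (ℕ → α) → α → Prop) (hP : ∀ d f, ∃! x, P d f x)
    (hloc : ∀ d f g, (∀ m < d, f m = g m) → P d f = P d g) :
    ∃! f : ℕ → α, ∀ d, P d f (f d) := by
  classical
  let extend (d : ℕ) (g : ∀ m < d, α) : ℕ → α :=
    fun m => if h : m < d then g m h else Classical.arbitrary α
  let f : ℕ → α := Nat.strongRec fun d g => (hP d (extend d g)).exists.choose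
  have hf : ∀ d, P d f (f d) := fun d => by
    have hfd : f d = (hP d (extend d fun m _ => f m)).exists.choose := Nat.strongRec_eq _ d
    rw [hfd, ← hloc d _ f fun m hm => dif_pos hm]
    exact (hP d _).exists.choose_spec
  refine ⟨f, hf, fun g hg => funext fun d => ?_⟩
  induction d using Nat.strong_induction_on with
  | _ d ih => exact (hP d f).unique (hloc d g f ih ▸ hg d) (hf d)

theorem Finset.Nat.sum_antidiagonal_eq_add_sum_range {M : Type*} [AddCommMonoid M]
    (h : ℕ → ℕ → M) (d : ℕ) :
    ∑ p ∈ antidiagonal d, h p.1 p.2 = h 0 d + ∑ k ∈ range d, h (d - k) k := by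
  rw [← Finset.Nat.sum_antidiagonal_swap]
  simp only [Prod.fst_swap, Prod.snd_swap]
  rw [Finset.Nat.sum_antidiagonal_eq_sum_range_succ (fun i j => h j i), sum_range_succ, add_comm,
    Nat.sub_self]

/-- Let `F` be a field, `V` a finite-dimensional `F`-vector space, `L : V → V` invertible,
`t = RatFunc.X` transcendental over `F`.  Given a formal power series
`M(z) = L + ∑_{d ≥ 1} A_d z^d` with coefficients in `End(V) ⊗_F F(t)` (encoded by its
coefficient function `M : ℕ → End`, with `M 0` the base change of `L`), there is a unique
formal power series `Ψ(z) = 1 + ∑_{d ≥ 1} Ψ_d z^d` with `Ψ(t z) ∘ L = M(z) ∘ Ψ(z)`,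
i.e. coefficientwise `t^d • (Ψ_d ∘ L) = ∑_{e+f=d} M_e ∘ Ψ_f` for all `d`. -/
theorem stmt8 (F : Type*) [Field F] (V : Type*) [AddCommGroup V] [Module F V]
    [FiniteDimensional F V] (L : V →ₗ[F] V) (hL : Function.Bijective L)
    (M : ℕ → (RatFunc F ⊗[F] V →ₗ[RatFunc F] RatFunc F ⊗[F] V))
    (hM0 : M 0 = L.baseChange (RatFunc F)) :
    ∃! Ψ : ℕ → (RatFunc F ⊗[F] V →ₗ[RatFunc F] RatFunc F ⊗[F] V),
      Ψ 0 = LinearMap.id ∧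
      ∀ d : ℕ, ((RatFunc.X : RatFunc F) ^ d) • (Ψ d ∘ₗ L.baseChange (RatFunc F))
        = ∑ p ∈ Finset.HasAntidiagonal.antidiagonal d, M p.1 ∘ₗ Ψ p.2 := by
  set t : RatFunc F := RatFunc.X
  set B := L.baseChange (RatFunc F)
  set S := fun d : ℕ => sylvesterMap (t ^ d) B
  have hχB : aeval B L.charpoly = 0 := by
    rw [← aeval_map_algebraMap (RatFunc F), ← LinearMap.charpoly_baseChange,
      LinearMap.aeval_self_charpoly]
  have hS : ∀ d, 0 < d → Bijective (S d) := fun d hd =>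
    sylvesterMap_bijective hχB <| L.isUnit_aeval_smul_baseChange
      (LinearMap.charpoly_coeff_zero_ne_zero hL) (RatFunc.transcendental_X.pow hd)
  have hS0 : S 0 LinearMap.id = 0 := by simp [S, ← Module.End.one_eq_id]
  have hcoeff : ∀ (Ψ : ℕ → Module.End (RatFunc F) (RatFunc F ⊗[F] V)) d,
      t ^ d • (Ψ d ∘ₗ B) = ∑ p ∈ antidiagonal d, M p.1 ∘ₗ Ψ p.2 ↔
        S d (Ψ d) = ∑ k ∈ range d, M (d - k) ∘ₗ Ψ k := fun Ψ d => by
    rw [Finset.Nat.sum_antidiagonal_eq_add_sum_range (fun i j => M i ∘ₗ Ψ j), hM0,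
      sylvesterMap_apply, sub_eq_iff_eq_add']
    rfl
  refine (existsUnique_congr fun Ψ => ?_).mpr (Nat.existsUnique_seq_of_existsUnique_next
    (fun d Ψ Y => (d = 0 → Y = LinearMap.id) ∧
      S d Y = ∑ k ∈ range d, M (d - k) ∘ₗ Ψ k)
    (fun d Ψ => ?_) (fun d Ψ Φ hΨΦ => ?_))
  · simp only [forall_and, forall_eq, hcoeff]
  · rcases Nat.eq_zero_or_pos d with rfl | hd
    · exact ⟨LinearMap.id, ⟨fun _ => rfl, by simpa using hS0⟩, fun Y hY => hY.1 rfl⟩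
    · simpa [hd.ne'] using (hS d hd).existsUnique _
  · rw [sum_congr rfl fun k hk => by rw [hΨΦ k (mem_range.mp hk)]]
end
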